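/- If λ = (λ_1, ..., λ_n) ∈ Γ_k with λ_1 ≥ ... ≥ λ_n, then there exists a constant C > 0 depending only on n and k such that λ_1 · σ_{k-1}(λ|1) ≥ C · σ_k(λ). -/

import Mathlib

open Finset

noncomputable def esym {n : ℕ} (k : ℕ) (lam : Fin n → ℝ) : ℝ :=
  ∑ s ∈ Finset.univ.powersetCard k, ∏ i ∈ s, lam i

noncomputable def esym1 {n : ℕ} (k : ℕ) (lam : Fin n → ℝ) (i : Fin n) : ℝ :=
  ∑ s ∈ (Finset.univ.erase i).powersetCard k, ∏ j ∈ s, lam j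

noncomputable def esym2 {n : ℕ} (k : ℕ) (lam : Fin n → ℝ) (i j : Fin n) : ℝ :=
  ∑ s ∈ ((Finset.univ.erase i).erase j).powersetCard k, ∏ l ∈ s, lam l

def GardingCone (n k : ℕ) : Set (Fin n → ℝ) :=
  {lam | ∀ j : ℕ, 1 ≤ j → j ≤ k → 0 < esym j lam}

/-!
Write `σ_k` for the elementary symmetric functions of `n` reals and `E_k = σ_k / C(n, k)` for
their means. By Rolle's theorem the derivative of `∏ (X - x_i)` has `n - 1` real roots, whose
means are `E_0, …, E_{n-1}`; inverting the entries reverses the sequence of means. Together these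
reduce Newton's inequality `E_j E_{j+2} ≤ E_{j+1}²` to two numbers, where it is AM-GM.

Newton's inequality shows that deleting an entry maps `Γ_k` into `Γ_{k-1}`. Write `λ = (a, s)`
with `a` the largest entry, so `σ_k(λ) = σ_k(s) + a σ_{k-1}(s)`. If `σ_k(s) > 0` then `s ∈ Γ_k`,
and induction on `n`, peeling off the largest entry `b` of `s`, gives
`σ_k(s) ≤ (n - k) b σ_{k-1}(s ∖ b) ≤ (n - k) a σ_{k-1}(s)`. Hence `C = 1 / (n - k + 1)` works.
-/

theorem Nat.choose_mul_choose_add_two_le_sq (m j : ℕ) :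
    m.choose j * m.choose (j + 2) ≤ m.choose (j + 1) ^ 2 := by
  rcases lt_or_ge m (j + 2) with h | h
  · simp [Nat.choose_eq_zero_of_lt h]
  have h1 := Nat.choose_succ_right_eq m j
  have h2 := Nat.choose_succ_right_eq m (j + 1)
  refine Nat.le_of_mul_le_mul_right ?_ (Nat.mul_pos (by omega) (by omega) : 0 < (m - j) * (j + 2))
  calc m.choose j * m.choose (j + 2) * ((m - j) * (j + 2))
      = (m.choose j * (m - j)) * (m.choose (j + 2) * (j + 2)) := by ring
    _ = m.choose (j + 1) ^ 2 * ((m - (j + 1)) * (j + 1)) := by rw [← h1, h2]; ring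
    _ ≤ m.choose (j + 1) ^ 2 * ((m - j) * (j + 2)) := by gcongr <;> omega

namespace Multiset

theorem esymm_zero (s : Multiset ℝ) : s.esymm 0 = 1 := by simp [esymm]

theorem esymm_one (s : Multiset ℝ) : s.esymm 1 = s.sum := by
  simp [esymm, powersetCard_one, map_map]

theorem esymm_cons (a : ℝ) (s : Multiset ℝ) (k : ℕ) :
    (a ::ₘ s).esymm (k + 1) = s.esymm (k + 1) + a * s.esymm k := by
  simp [esymm, powersetCard_cons, sum_map_mul_left]

theorem esymm_eq_zero_of_card_lt {s : Multiset ℝ} {k : ℕ} (h : card s < k) : s.esymm k = 0 := by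
  simp [esymm, powersetCard_eq_empty _ h]

theorem esymm_card (s : Multiset ℝ) : s.esymm (card s) = s.prod := by
  induction s using Multiset.induction with
  | empty => simp [esymm]
  | cons a s ih =>
    rw [card_cons, esymm_cons, ih, esymm_eq_zero_of_card_lt (by simp), prod_cons]
    ring

theorem esymm_map_inv_mul_prod {s : Multiset ℝ} (hs : (0 : ℝ) ∉ s) :
    ∀ t u, t + u = card s → (s.map (·⁻¹)).esymm t * s.prod = s.esymm u := by
  induction s using Multiset.induction with
  | empty =>
    intro t u htu
    obtain ⟨rfl, rfl⟩ : t = 0 ∧ u = 0 := by simpa using htu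
    simp [esymm_zero]
  | cons a s ih =>
    intro t u htu
    have ha : a ≠ 0 := fun h => hs (h ▸ mem_cons_self a s)
    replace ih := ih (fun h => hs (mem_cons_of_mem h))
    rw [card_cons] at htu
    rw [map_cons, prod_cons]
    rcases t with _ | t
    · rw [esymm_zero, one_mul, ← prod_cons, ← esymm_card, card_cons, ← htu, zero_add]
    rw [esymm_cons]
    rcases u with _ | u
    · rw [esymm_eq_zero_of_card_lt (by simp; omega), zero_add, esymm_zero,
        mul_mul_mul_comm, inv_mul_cancel₀ ha, one_mul, ih t 0 (by omega), esymm_zero]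
    · rw [esymm_cons, ← ih (t + 1) u (by omega), ← ih t (u + 1) (by omega)]
      field_simp
      ring

open Polynomial in
/-- `r` is the multiset of roots of the derivative of `∏ (X - x)`, `x ∈ s`: it has full size
by Rolle's theorem. -/
theorem exists_mul_esymm_eq_of_card_eq_succ (s : Multiset ℝ) {m : ℕ} (hs : card s = m + 1) :
    ∃ r : Multiset ℝ, card r = m ∧
      ∀ t ≤ m, (m + 1 : ℝ) * r.esymm t = (m + 1 - t : ℝ) * s.esymm t := by
  set P : ℝ[X] := (s.map fun x => X - C x).prod
  have hPcoeff : ∀ k ≤ m + 1, P.coeff k = (-1) ^ (m + 1 - k) * s.esymm (m + 1 - k) := by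
    intro k hk
    rw [prod_X_sub_C_coeff s (hs ▸ hk), hs]
  have hDcoeff : ∀ k ≤ m,
      (derivative P).coeff k = (k + 1 : ℝ) * ((-1) ^ (m - k) * s.esymm (m - k)) := by
    intro k hk
    rw [coeff_derivative, hPcoeff (k + 1) (by omega), mul_comm]
    simp [show m + 1 - (k + 1) = m - k by omega]
  have hDm : (derivative P).coeff m = m + 1 := by
    rw [hDcoeff m le_rfl, Nat.sub_self, pow_zero, esymm_zero, one_mul, mul_one]
  have hDdeg : (derivative P).natDegree = m := by
    refine natDegree_eq_of_le_of_coeff_ne_zero ?_ (by rw [hDm]; positivity)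
    have : P.natDegree = m + 1 := by
      rw [natDegree_multiset_prod_X_sub_C_eq_card, hs]
    have := natDegree_derivative_le P
    omega
  have hroots : card (derivative P).roots = (derivative P).natDegree := by
    have h1 := card_roots_le_derivative P
    have h2 := card_roots' (derivative P)
    rw [roots_multiset_prod_X_sub_C, hs] at h1
    omega
  refine ⟨(derivative P).roots, hroots.trans hDdeg, fun t ht => ?_⟩
  have h := coeff_eq_esymm_roots_of_card hroots (k := m - t) (by omega)
  rw [hDcoeff _ (by omega), leadingCoeff, hDdeg, hDm, show m - (m - t) = t by omega] at h
  push_cast [ht] at h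
  apply mul_left_cancel₀ (pow_ne_zero t (neg_ne_zero.2 one_ne_zero) : (-1 : ℝ) ^ t ≠ 0)
  linear_combination -h

noncomputable def esymmMean (s : Multiset ℝ) (k : ℕ) : ℝ := s.esymm k / (card s).choose k

theorem esymmMean_card (s : Multiset ℝ) : s.esymmMean (card s) = s.prod := by
  simp [esymmMean, esymm_card]

theorem esymmMean_map_inv_mul_prod {s : Multiset ℝ} (hs : (0 : ℝ) ∉ s) {t : ℕ}
    (ht : t ≤ card s) : (s.map (·⁻¹)).esymmMean t * s.prod = s.esymmMean (card s - t) := by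
  rw [esymmMean, esymmMean, card_map, Nat.choose_symm ht, div_mul_eq_mul_div,
    esymm_map_inv_mul_prod hs t (card s - t) (by omega)]

theorem esymmMean_two_le_sq {s : Multiset ℝ} (hs : card s = 2) :
    s.esymmMean 2 ≤ s.esymmMean 1 ^ 2 := by
  obtain ⟨x, y, rfl⟩ := card_eq_two.1 hs
  simp only [esymmMean, insert_eq_cons, esymm_pair_one, esymm_pair_two]
  norm_num
  nlinarith [sq_nonneg (x - y)]

theorem exists_esymmMean_eq_of_card_eq_succ (s : Multiset ℝ) {m : ℕ} (hs : card s = m + 1) :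
    ∃ r : Multiset ℝ, card r = m ∧ ∀ t ≤ m, r.esymmMean t = s.esymmMean t := by
  obtain ⟨r, hr, hrs⟩ := exists_mul_esymm_eq_of_card_eq_succ s hs
  refine ⟨r, hr, fun t ht => ?_⟩
  have hchoose : (m.choose t : ℝ) * (m + 1) = (m + 1).choose t * (m + 1 - t) := by
    have h : ((m.choose t * (m + 1) : ℕ) : ℝ) = ((m + 1).choose t * (m + 1 - t) : ℕ) := by
      rw [Nat.choose_mul_succ_eq]
    push_cast [Nat.cast_sub (show t ≤ m + 1 by omega)] at h
    exact h
  have hpos : (0 : ℝ) < m.choose t := by exact_mod_cast Nat.choose_pos ht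
  have hpos' : (0 : ℝ) < m + 1 - t := by
    have : (t : ℝ) ≤ m := by exact_mod_cast ht
    linarith
  rw [esymmMean, esymmMean, hr, hs, div_eq_div_iff hpos.ne'
    (by exact_mod_cast (Nat.choose_pos (by omega : t ≤ m + 1)).ne')]
  apply mul_right_cancel₀ hpos'.ne'
  linear_combination (-r.esymm t) * hchoose + (m.choose t : ℝ) * hrs t ht

theorem exists_esymmMean_eq_of_le_card (s : Multiset ℝ) {d : ℕ} (hd : d ≤ card s) :
    ∃ r : Multiset ℝ, card r = d ∧ ∀ t ≤ d, r.esymmMean t = s.esymmMean t := by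
  induction hn : card s - d generalizing s with
  | zero => exact ⟨s, by omega, fun _ _ => rfl⟩
  | succ e ih =>
    obtain ⟨r, hr, hrs⟩ := exists_esymmMean_eq_of_card_eq_succ s (m := card s - 1) (by omega)
    obtain ⟨q, hq, hqr⟩ := ih r (by omega) (by omega)
    exact ⟨q, hq, fun t ht => (hqr t ht).trans (hrs t (by omega))⟩

theorem esymmMean_mul_esymmMean_le_sq (s : Multiset ℝ) {j : ℕ} (hj : j + 2 ≤ card s) :
    s.esymmMean j * s.esymmMean (j + 2) ≤ s.esymmMean (j + 1) ^ 2 := by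
  obtain ⟨r, hr, hrs⟩ := exists_esymmMean_eq_of_le_card s hj
  rw [← hrs j (by omega), ← hrs (j + 1) (by omega), ← hrs (j + 2) le_rfl, ← hr,
    esymmMean_card]
  by_cases h0 : (0 : ℝ) ∈ r
  · rw [prod_eq_zero h0, mul_zero]
    positivity
  obtain ⟨q, hq, hqr⟩ := exists_esymmMean_eq_of_le_card (r.map (·⁻¹)) (d := 2) (by simp [hr])
  have hE : ∀ t ≤ 2, q.esymmMean t * r.prod = r.esymmMean (j + 2 - t) := fun t ht => by
    rw [hqr t ht, esymmMean_map_inv_mul_prod h0 (by omega), hr]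
  have h2 := hE 2 le_rfl
  have h1 := hE 1 (by omega)
  simp only [show j + 2 - 2 = j by omega, show j + 2 - 1 = j + 1 by omega] at h2 h1
  rw [← h2, ← h1]
  calc q.esymmMean 2 * r.prod * r.prod = q.esymmMean 2 * r.prod ^ 2 := by ring
    _ ≤ q.esymmMean 1 ^ 2 * r.prod ^ 2 := by gcongr; exact esymmMean_two_le_sq hq
    _ = (q.esymmMean 1 * r.prod) ^ 2 := by ring

theorem esymm_mul_esymm_le_sq (s : Multiset ℝ) (j : ℕ) :
    s.esymm j * s.esymm (j + 2) ≤ s.esymm (j + 1) ^ 2 := by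
  rcases lt_or_ge (card s) (j + 2) with hs | hs
  · rw [esymm_eq_zero_of_card_lt hs, mul_zero]
    positivity
  have hE : ∀ i, s.esymm i = s.esymmMean i * (card s).choose i := fun i => by
    rcases lt_or_ge (card s) i with hi | hi
    · simp [esymmMean, esymm_eq_zero_of_card_lt hi]
    · rw [esymmMean, div_mul_cancel₀]
      exact_mod_cast (Nat.choose_pos hi).ne'
  have hchoose : ((card s).choose j * (card s).choose (j + 2) : ℝ) ≤
      (card s).choose (j + 1) ^ 2 := by
    exact_mod_cast Nat.choose_mul_choose_add_two_le_sq _ _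
  rw [hE j, hE (j + 1), hE (j + 2)]
  calc s.esymmMean j * (card s).choose j * (s.esymmMean (j + 2) * (card s).choose (j + 2))
      = s.esymmMean j * s.esymmMean (j + 2) * ((card s).choose j * (card s).choose (j + 2)) := by
        ring
    _ ≤ s.esymmMean (j + 1) ^ 2 * ((card s).choose j * (card s).choose (j + 2)) :=
        mul_le_mul_of_nonneg_right (esymmMean_mul_esymmMean_le_sq s hs) (by positivity)
    _ ≤ s.esymmMean (j + 1) ^ 2 * (card s).choose (j + 1) ^ 2 :=
        mul_le_mul_of_nonneg_left hchoose (sq_nonneg _)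
    _ = (s.esymmMean (j + 1) * (card s).choose (j + 1)) ^ 2 := by ring

/-- `Γ_k`, as a property of the multiset of entries; the condition at `j = 0` is automatic. -/
def InGardingCone (k : ℕ) (s : Multiset ℝ) : Prop := ∀ j ≤ k, 0 < s.esymm j

namespace InGardingCone

variable {k : ℕ} {a : ℝ} {s : Multiset ℝ}

theorem mono {l : ℕ} (h : InGardingCone l s) (hkl : k ≤ l) : InGardingCone k s :=
  fun j hj => h j (hj.trans hkl)

theorem le_card (h : InGardingCone k s) : k ≤ card s := by
  by_contra! hlt
  exact (h k le_rfl).ne' (esymm_eq_zero_of_card_lt hlt)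

theorem of_cons (h : InGardingCone (k + 1) (a ::ₘ s)) : InGardingCone k s := by
  induction k with
  | zero => intro j hj; simp [Nat.le_zero.1 hj, esymm_zero]
  | succ k ih =>
    have hs := ih (h.mono (by omega))
    refine fun j hj => (Nat.lt_or_eq_of_le hj).elim (fun hj => hs j (by omega)) fun hj => ?_
    subst hj
    have h1 := h (k + 1) (by omega)
    have h2 := h (k + 2) le_rfl
    rw [esymm_cons] at h1 h2
    have hk := hs k le_rfl
    have hN := esymm_mul_esymm_le_sq s k
    by_contra! hneg
    -- `a σ_k > -σ_{k+1} ≥ 0` and `σ_{k+2} > -a σ_{k+1}` force `σ_k σ_{k+2} > σ_{k+1}²`.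
    nlinarith [mul_pos hk (by nlinarith : 0 < s.esymm (k + 2) + a * s.esymm (k + 1))]

theorem pos_of_forall_le (h : InGardingCone 1 (a ::ₘ s)) (hmax : ∀ x ∈ s, x ≤ a) : 0 < a := by
  have h1 := h 1 le_rfl
  rw [esymm_one, sum_cons] at h1
  have := sum_le_card_nsmul s a hmax
  rw [nsmul_eq_mul] at this
  nlinarith [(card s).cast_nonneg (α := ℝ)]

end InGardingCone

theorem mul_esymm_le_mul_esymm_cons {a b : ℝ} {k : ℕ} {s : Multiset ℝ} (hb : 0 ≤ b)
    (hba : b ≤ a) (hs : InGardingCone k s) : b * s.esymm k ≤ a * (b ::ₘ s).esymm k := by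
  rcases k with _ | k
  · simpa [esymm_zero] using hba
  rw [esymm_cons]
  nlinarith [hs k (by omega), hs (k + 1) le_rfl, mul_nonneg hb (hb.trans hba)]

theorem esymm_cons_le_of_forall_le {a : ℝ} {k : ℕ} {s : Multiset ℝ}
    (h : InGardingCone (k + 1) (a ::ₘ s)) (hmax : ∀ x ∈ s, x ≤ a) :
    (a ::ₘ s).esymm (k + 1) ≤ ((card s : ℝ) - k + 1) * (a * s.esymm k) := by
  induction s using Multiset.strongInductionOn generalizing a with
  | ih s ih =>
  have ha := (h.mono (by omega)).pos_of_forall_le hmax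
  have hs := h.of_cons
  have hak : 0 < a * s.esymm k := mul_pos ha (hs k le_rfl)
  rw [esymm_cons]
  by_cases hsk : s.esymm (k + 1) ≤ 0
  · have hk : (k : ℝ) ≤ card s := by exact_mod_cast hs.le_card
    nlinarith
  rw [not_le] at hsk
  have hs' : InGardingCone (k + 1) s :=
    fun j hj => (Nat.lt_or_eq_of_le hj).elim (fun hj => hs j (by omega)) (· ▸ hsk)
  have hcard := hs'.le_card
  have hcard' : (k : ℝ) + 1 ≤ card s := by exact_mod_cast hcard
  obtain ⟨b, hb, hbmax⟩ := s.toFinset.exists_max_image id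
    (toFinset_nonempty.2 (card_pos.1 (by omega)))
  rw [mem_toFinset] at hb
  have hsb : b ::ₘ s.erase b = s := cons_erase hb
  have hbmax' : ∀ x ∈ s.erase b, x ≤ b :=
    fun x hx => hbmax x (mem_toFinset.2 (mem_of_mem_erase hx))
  rw [← hsb] at hs'
  have hIH := ih _ (erase_lt.2 hb) hs' hbmax'
  have hb0 := (hs'.mono (by omega)).pos_of_forall_le hbmax'
  have hchain := mul_esymm_le_mul_esymm_cons hb0.le (hmax b hb) hs'.of_cons
  rw [hsb] at hIH hchain
  rw [card_erase_of_mem hb, Nat.pred_eq_sub_one, Nat.cast_pred (by omega)] at hIH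
  nlinarith

end Multiset

theorem esym_eq_esymm {n : ℕ} (k : ℕ) (lam : Fin n → ℝ) :
    esym k lam = (univ.val.map lam).esymm k :=
  (Finset.esymm_map_val lam univ k).symm

theorem esym1_eq_esymm {n : ℕ} (k : ℕ) (lam : Fin n → ℝ) (i : Fin n) :
    esym1 k lam i = ((univ.erase i).val.map lam).esymm k :=
  (Finset.esymm_map_val lam (univ.erase i) k).symm

theorem map_univ_val_eq_cons {n : ℕ} (lam : Fin n → ℝ) (i : Fin n) :
    univ.val.map lam = lam i ::ₘ (univ.erase i).val.map lam := by
  rw [← Multiset.map_cons, erase_val, Multiset.cons_erase (mem_univ i)]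

theorem inGardingCone_map_of_mem_gardingCone {n k : ℕ} {lam : Fin n → ℝ}
    (h : lam ∈ GardingCone n k) : Multiset.InGardingCone k (univ.val.map lam) := by
  rintro (_ | j) hj
  · simp [Multiset.esymm_zero]
  · rw [← esym_eq_esymm]
    exact h (j + 1) (by omega) hj

theorem stmt5 {n : ℕ} (k : ℕ) (hk : 1 ≤ k) (hkn : k ≤ n) :
    ∃ C : ℝ, 0 < C ∧ ∀ lam : Fin n → ℝ, lam ∈ GardingCone n k → Antitone lam →
      lam ⟨0, by omega⟩ * esym1 (k - 1) lam ⟨0, by omega⟩ ≥ C * esym k lam := by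
  have hkn' : (k : ℝ) ≤ n := by exact_mod_cast hkn
  refine ⟨((n : ℝ) - k + 1)⁻¹, inv_pos.2 (by linarith), fun lam hlam hanti => ?_⟩
  set i₀ : Fin n := ⟨0, by omega⟩
  set s := (univ.erase i₀).val.map lam
  obtain ⟨k, rfl⟩ : ∃ j, k = j + 1 := ⟨k - 1, by omega⟩
  have hcone : Multiset.InGardingCone (k + 1) (lam i₀ ::ₘ s) := by
    rw [← map_univ_val_eq_cons]
    exact inGardingCone_map_of_mem_gardingCone hlam
  have hmax : ∀ x ∈ s, x ≤ lam i₀ := by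
    simp only [s, Multiset.mem_map, mem_val]
    rintro _ ⟨i, -, rfl⟩
    exact hanti (Nat.zero_le i.val)
  have hcard : (Multiset.card s : ℝ) = n - 1 := by
    simp [s, Nat.cast_pred (by omega : 0 < n)]
  have key := Multiset.esymm_cons_le_of_forall_le hcone hmax
  rw [hcard, ← map_univ_val_eq_cons, ← esym_eq_esymm] at key
  rw [esym1_eq_esymm, Nat.add_sub_cancel, ge_iff_le, inv_mul_le_iff₀ (by linarith)]
  push_cast at key ⊢
  linarith
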